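/- Let (A; ∧, ∨, 0, 1) be a finite bounded distributive lattice, let a, b ∈ A with a < b, let n ≥ |A| + 2, and let 𝒜 be a Sperner system over {1,…,n}. Define the (a,b)-truncated term operation t : Aⁿ → A by t(x₁,…,xₙ) = a ∨ ( b ∧ ⋁_{S∈𝒜} ⋀_{i∈S} x_i ). Then 𝒜 is reconstructible (every Sperner system ℬ over {1,…,n} hypomorphic to 𝒜 is isomorphic to 𝒜) if and only if t is reconstructible (every function g : Aⁿ → A having the same deck as t is equivalent to t). -/

import Mathlib

section SetSystems

variable {α β : Type*}

/-- A family of finite sets is a Sperner system (an antichain under inclusion). -/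
def IsSperner [DecidableEq α] (F : Finset (Finset α)) : Prop :=
  ∀ S ∈ F, ∀ T ∈ F, S ⊆ T → S = T

/-- Isomorphism of set systems with the given ground sets: a bijection `σ` of the
ground set `A` onto the ground set `B` mapping the family `F` onto the family `G`. -/
def SystemIso [DecidableEq α] [DecidableEq β] (A : Finset α) (F : Finset (Finset α))
    (B : Finset β) (G : Finset (Finset β)) : Prop :=
  ∃ σ : α → β, Set.BijOn σ ↑A ↑B ∧ F.image (fun S => S.image σ) = G

/-- Identification of `v` with `u` inside a block: `S_I = (S ∖ {v}) ∪ {u}` if `v ∈ S`,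
and `S_I = S` otherwise. -/
def identifyBlock [DecidableEq α] (u v : α) (S : Finset α) : Finset α :=
  if v ∈ S then insert u (S.erase v) else S

/-- The identified system `𝒜_I` for `I = {u, v}` (with `u` the kept representative). -/
def identifySystem [DecidableEq α] (u v : α) (F : Finset (Finset α)) : Finset (Finset α) :=
  F.image (identifyBlock u v)

/-- The minimal members of a family with respect to inclusion. -/
def minimals [DecidableEq α] (F : Finset (Finset α)) : Finset (Finset α) :=
  F.filter (fun S => ∀ T ∈ F, T ⊆ S → T = S)

/-- `𝒜*_I`: the Sperner system of minimal members of the identified system. -/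
def starMinor [DecidableEq α] (u v : α) (F : Finset (Finset α)) : Finset (Finset α) :=
  minimals (identifySystem u v F)

/-- Strong hypomorphism: for every two-element subset `I = {u, v}` of the ground set `A`,
the systems `F*_I` and `G*_I` (both over `A ∖ {v}`) are isomorphic. -/
def StronglyHypomorphic [DecidableEq α] (A : Finset α) (F G : Finset (Finset α)) : Prop :=
  ∀ u ∈ A, ∀ v ∈ A, u ≠ v →
    SystemIso (A.erase v) (starMinor u v F) (A.erase v) (starMinor u v G)

/-- Hypomorphism: a bijection `φ` of the two-element subsets of the ground set `A`
such that `F*_I` is isomorphic to `G*_{φ I}` for every two-element subset `I`. -/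
def Hypomorphic [DecidableEq α] (A : Finset α) (F G : Finset (Finset α)) : Prop :=
  ∃ φ : {P : Finset α // P ∈ A.powersetCard 2} ≃ {P : Finset α // P ∈ A.powersetCard 2},
    ∀ (P : {P : Finset α // P ∈ A.powersetCard 2}) (u v u' v' : α),
      u ≠ v → (P : Finset α) = {u, v} → u' ≠ v' → ((φ P : Finset α)) = {u', v'} →
      SystemIso (A.erase v) (starMinor u v F) (A.erase v') (starMinor u' v' G)

end SetSystems

section Functions

/-- The index map `δ_I : {1,…,n} → {1,…,n−1}` for `I = {i, j}` with `i < j`. -/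
def deltaMap {n : ℕ} (i j : Fin n) (h : (i : ℕ) < (j : ℕ)) : Fin n → Fin (n - 1) :=
  fun t =>
    if h1 : (t : ℕ) < (j : ℕ) then ⟨(t : ℕ), by have hj := j.isLt; omega⟩
    else if h2 : (t : ℕ) = (j : ℕ) then ⟨(i : ℕ), by have hj := j.isLt; omega⟩
    else ⟨(t : ℕ) - 1, by have ht := t.isLt; omega⟩

/-- The identification minor `f_I` of `f` for `I = {i, j}` with `i < j`:
`f_I(a₁,…,a_{n−1}) = f(a₁,…,a_{j−1}, a_i, a_j,…,a_{n−1})`. -/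
def idMinor {n : ℕ} {A B : Type*} (f : (Fin n → A) → B) (i j : Fin n)
    (h : (i : ℕ) < (j : ℕ)) : (Fin (n - 1) → A) → B :=
  fun a => f (a ∘ deltaMap i j h)

/-- Two functions of the same arity are equivalent if one is obtained from the other
by permuting the arguments. -/
def FnEquiv {k : ℕ} {A B : Type*} (f g : (Fin k → A) → B) : Prop :=
  ∃ σ : Fin k ≃ Fin k, ∀ a, f a = g (a ∘ σ)

/-- Two `n`-ary functions have the same deck if there is a bijection `φ` of the set of
two-element subsets of `{1,…,n}` (modelled as ordered pairs `i < j`) such that `f_I` is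
equivalent to `g_{φ I}` for every such `I`. -/
def SameDeck {n : ℕ} {A B : Type*} (f g : (Fin n → A) → B) : Prop :=
  ∃ φ : {p : Fin n × Fin n // (p.1 : ℕ) < (p.2 : ℕ)} ≃
        {p : Fin n × Fin n // (p.1 : ℕ) < (p.2 : ℕ)},
    ∀ p : {p : Fin n × Fin n // (p.1 : ℕ) < (p.2 : ℕ)},
      FnEquiv (idMinor f p.1.1 p.1.2 p.2) (idMinor g (φ p).1.1 (φ p).1.2 (φ p).2)

end Functions

/-- `h` is a polynomial operation of the bounded distributive lattice `A` iff it
satisfies Goodstein's identity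
`h(x) = ⋁_{I ⊆ {1,…,n}} (h(e_I) ∧ ⋀_{i∈I} x_i)`,
where `e_I` is the characteristic tuple of `I`. -/
def IsLatticePoly {A : Type*} [DistribLattice A] [BoundedOrder A] {n : ℕ}
    (h : (Fin n → A) → A) : Prop :=
  ∀ x : Fin n → A,
    h x = (Finset.univ : Finset (Fin n)).powerset.sup
      (fun I => h (fun i => if i ∈ I then (⊤ : A) else ⊥) ⊓ I.inf x)

/-- The `(a,b)`-truncated term operation of a Sperner system `F`:
`t(x) = a ∨ (b ∧ ⋁_{S∈F} ⋀_{i∈S} x_i)`. -/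
def truncTerm {A : Type*} [DistribLattice A] [BoundedOrder A] {n : ℕ}
    (a b : A) (F : Finset (Finset (Fin n))) : (Fin n → A) → A :=
  fun x => a ⊔ (b ⊓ F.sup fun S => S.inf x)


section PartA
open Finset
variable {A : Type*} [DistribLattice A] [BoundedOrder A]
variable {ι κ : Type*} [DecidableEq ι] [DecidableEq κ]

/-- generic truncated term -/
def tt (a b : A) (F : Finset (Finset ι)) : (ι → A) → A :=
  fun x => a ⊔ (b ⊓ F.sup fun S => S.inf x)

def chi (T : Finset ι) : ι → A := fun i => if i ∈ T then ⊤ else ⊥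

lemma inf_chi (S T : Finset ι) :
    S.inf (chi (A := A) T) = if S ⊆ T then ⊤ else ⊥ := by
  split_ifs with h
  · rw [Finset.inf_eq_top_iff]
    intro i hi
    simp [chi, h hi]
  · obtain ⟨i, hiS, hiT⟩ := not_subset.mp h
    apply le_antisymm _ bot_le
    calc S.inf (chi (A := A) T) ≤ chi (A := A) T i := Finset.inf_le hiS
    _ = ⊥ := by simp [chi, hiT]

lemma sup_inf_chi (F : Finset (Finset ι)) (T : Finset ι) :
    F.sup (fun S => S.inf (chi (A := A) T)) = if ∃ S ∈ F, S ⊆ T then ⊤ else ⊥ := by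
  split_ifs with h
  · obtain ⟨S, hS, hST⟩ := h
    apply le_antisymm le_top
    calc (⊤ : A) = S.inf (chi (A := A) T) := by rw [inf_chi, if_pos hST]
    _ ≤ _ := Finset.le_sup (f := fun S => S.inf (chi (A := A) T)) hS
  · apply le_antisymm _ bot_le
    apply Finset.sup_le
    intro S hS
    rw [inf_chi, if_neg (fun hc => h ⟨S, hS, hc⟩)]

lemma tt_chi {a b : A} (hab : a < b) (F : Finset (Finset ι)) (T : Finset ι) :
    tt a b F (chi T) = if ∃ S ∈ F, S ⊆ T then b else a := by
  unfold tt
  rw [sup_inf_chi]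
  split_ifs
  · rw [inf_top_eq, sup_eq_right.mpr hab.le]
  · rw [inf_bot_eq, sup_bot_eq]

lemma tt_chi_eq_b_iff {a b : A} (hab : a < b) (F : Finset (Finset ι)) (T : Finset ι) :
    tt a b F (chi T) = b ↔ ∃ S ∈ F, S ⊆ T := by
  rw [tt_chi hab]
  split_ifs with h
  · simp [h]
  · simp [h, hab.ne]

/-- Sperner systems with same up-closure coincide. -/
lemma sperner_eq_of_upiff {C D : Finset (Finset ι)} (hC : IsSperner C) (hD : IsSperner D)
    (h : ∀ T : Finset ι, (∃ S ∈ C, S ⊆ T) ↔ (∃ S ∈ D, S ⊆ T)) : C = D := by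
  have key : ∀ (C D : Finset (Finset ι)), IsSperner C → IsSperner D →
      (∀ T : Finset ι, (∃ S ∈ C, S ⊆ T) ↔ (∃ S ∈ D, S ⊆ T)) → C ⊆ D := by
    intro C D hC hD h S hS
    obtain ⟨S', hS', hsub⟩ := (h S).mp ⟨S, hS, subset_rfl⟩
    obtain ⟨S'', hS'', hsub'⟩ := (h S').mpr ⟨S', hS', subset_rfl⟩
    have heq : S'' = S := hC S'' hS'' S hS (hsub'.trans hsub)
    have hS'S : S' = S := subset_antisymm hsub (heq ▸ hsub')
    exact hS'S ▸ hS'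
  exact le_antisymm (key C D hC hD h) (key D C hD hC (fun T => (h T).symm))

lemma tt_inj {a b : A} (hab : a < b) {C D : Finset (Finset ι)} (hC : IsSperner C)
    (hD : IsSperner D) (h : ∀ x, tt a b C x = tt a b D x) : C = D := by
  apply sperner_eq_of_upiff hC hD
  intro T
  rw [← tt_chi_eq_b_iff hab, ← tt_chi_eq_b_iff (A := A) hab, h]

/-- every member of F contains a minimal member -/
lemma exists_minimal_subset (F : Finset (Finset ι)) :
    ∀ S ∈ F, ∃ T ∈ minimals F, T ⊆ S := by
  have : ∀ (k : ℕ) (S : Finset ι), S.card ≤ k → S ∈ F → ∃ T ∈ minimals F, T ⊆ S := by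
    intro k
    induction k with
    | zero =>
      intro S hc hS
      refine ⟨S, ?_, subset_rfl⟩
      simp only [minimals, mem_filter]
      exact ⟨hS, fun T hT hTS => subset_antisymm hTS (by
        simp only [Finset.card_eq_zero.mp (Nat.le_zero.mp hc)] at hTS ⊢
        exact (Finset.subset_empty.mp hTS) ▸ subset_rfl)⟩
    | succ k ih =>
      intro S hc hS
      by_cases hmin : ∀ T ∈ F, T ⊆ S → T = S
      · exact ⟨S, by simp only [minimals, mem_filter]; exact ⟨hS, hmin⟩, subset_rfl⟩
      · push_neg at hmin
        obtain ⟨T, hT, hTS, hne⟩ := hmin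
        have hss : T ⊂ S := ssubset_of_subset_of_ne hTS hne
        obtain ⟨T', hT', hsub⟩ := ih T (by
          have := Finset.card_lt_card hss
          omega) hT
        exact ⟨T', hT', hsub.trans hTS⟩
  intro S hS
  exact this S.card S le_rfl hS

lemma minimals_subset (F : Finset (Finset ι)) : minimals F ⊆ F := filter_subset _ _

lemma isSperner_minimals (F : Finset (Finset ι)) : IsSperner (minimals F) := by
  intro S hS T hT hST
  simp only [minimals, mem_filter] at hS hT
  exact hT.2 S hS.1 hST

lemma sup_inf_minimals (F : Finset (Finset ι)) (x : ι → A) :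
    (minimals F).sup (fun S => S.inf x) = F.sup (fun S => S.inf x) := by
  apply le_antisymm (Finset.sup_mono (minimals_subset F))
  apply Finset.sup_le
  intro S hS
  obtain ⟨T, hT, hTS⟩ := exists_minimal_subset F S hS
  calc S.inf x ≤ T.inf x := Finset.inf_mono hTS
  _ ≤ _ := Finset.le_sup (f := fun S => S.inf x) hT

lemma tt_minimals (a b : A) (F : Finset (Finset ι)) (x : ι → A) :
    tt a b (minimals F) x = tt a b F x := by
  unfold tt; rw [sup_inf_minimals]

lemma tt_comp (a b : A) (F : Finset (Finset κ)) (σ : κ → ι) (x : ι → A) :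
    tt a b F (x ∘ σ) = tt a b (F.image (fun S => S.image σ)) x := by
  unfold tt
  rw [Finset.sup_image]
  congr 2
  apply Finset.sup_congr rfl
  intro S _
  show S.inf (x ∘ σ) = (S.image σ).inf x
  rw [Finset.inf_image]

end PartA

section PartB
open Finset

variable {n : ℕ}

/-- a right inverse of `deltaMap i j h` that avoids `j`. -/
def invDelta (j : Fin n) : Fin (n - 1) → Fin n :=
  fun k => if (k : ℕ) < (j : ℕ) then ⟨(k : ℕ), by have := j.isLt; omega⟩
           else ⟨(k : ℕ) + 1, by have := k.isLt; have := j.isLt; omega⟩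

lemma deltaMap_coe {i j : Fin n} (h : (i : ℕ) < (j : ℕ)) (t : Fin n) :
    ((deltaMap i j h t : Fin (n - 1)) : ℕ) =
      if (t : ℕ) < (j : ℕ) then (t : ℕ) else if (t : ℕ) = (j : ℕ) then (i : ℕ)
        else (t : ℕ) - 1 := by
  simp only [deltaMap]
  split_ifs <;> rfl

lemma invDelta_coe (j : Fin n) (k : Fin (n - 1)) :
    ((invDelta j k : Fin n) : ℕ) = if (k : ℕ) < (j : ℕ) then (k : ℕ) else (k : ℕ) + 1 := by
  simp only [invDelta]
  split_ifs <;> rfl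

lemma invDelta_deltaMap {i j : Fin n} (h : (i : ℕ) < (j : ℕ)) {t : Fin n} (ht : t ≠ j) :
    invDelta j (deltaMap i j h t) = t := by
  have htj : (t : ℕ) ≠ (j : ℕ) := fun hc => ht (Fin.ext hc)
  have h1 := t.isLt
  have h2 := j.isLt
  apply Fin.ext
  rw [invDelta_coe, deltaMap_coe h]
  split_ifs <;> omega

lemma deltaMap_invDelta {i j : Fin n} (h : (i : ℕ) < (j : ℕ)) (k : Fin (n - 1)) :
    deltaMap i j h (invDelta j k) = k := by
  have h1 := k.isLt
  have h2 := j.isLt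
  apply Fin.ext
  rw [deltaMap_coe h, invDelta_coe]
  split_ifs <;> omega

lemma invDelta_ne (j : Fin n) (k : Fin (n - 1)) : invDelta j k ≠ j := by
  intro hc
  have h1 := k.isLt
  have := invDelta_coe j k ▸ congrArg Fin.val hc
  split_ifs at this <;> omega

lemma deltaMap_i_eq_deltaMap_j {i j : Fin n} (h : (i : ℕ) < (j : ℕ)) :
    deltaMap i j h i = deltaMap i j h j := by
  apply Fin.ext
  rw [deltaMap_coe h, deltaMap_coe h]
  split_ifs <;> omega

lemma injOn_deltaMap {i j : Fin n} (h : (i : ℕ) < (j : ℕ)) :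
    Set.InjOn (deltaMap i j h) ↑((univ : Finset (Fin n)).erase j) := by
  intro s hs t ht hst
  simp only [coe_erase, Set.mem_diff, Set.mem_singleton_iff] at hs ht
  have := congrArg (invDelta j) hst
  rwa [invDelta_deltaMap h hs.2, invDelta_deltaMap h ht.2] at this

lemma bijOn_deltaMap {i j : Fin n} (h : (i : ℕ) < (j : ℕ)) :
    Set.BijOn (deltaMap i j h) ↑((univ : Finset (Fin n)).erase j)
      ↑(univ : Finset (Fin (n - 1))) := by
  refine ⟨fun s _ => by simp, injOn_deltaMap h, fun k _ => ?_⟩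
  refine ⟨invDelta j k, ?_, deltaMap_invDelta h k⟩
  simp [invDelta_ne j k]

lemma injective_invDelta (j : Fin n) {i : Fin n} (h : (i : ℕ) < (j : ℕ)) :
    Function.Injective (invDelta j) := by
  intro k1 k2 hk
  have := congrArg (deltaMap i j h) hk
  rwa [deltaMap_invDelta h, deltaMap_invDelta h] at this

lemma bijOn_invDelta {i j : Fin n} (h : (i : ℕ) < (j : ℕ)) :
    Set.BijOn (invDelta j) ↑(univ : Finset (Fin (n - 1)))
      ↑((univ : Finset (Fin n)).erase j) := by
  refine ⟨fun k _ => by simp [invDelta_ne j k], fun k1 _ k2 _ hk => injective_invDelta j h hk,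
    fun t ht => ?_⟩
  simp only [coe_erase, Set.mem_diff, Set.mem_singleton_iff] at ht
  exact ⟨deltaMap i j h t, by simp, invDelta_deltaMap h ht.2⟩

end PartB

section PartC
open Finset

variable {ι κ : Type*} [DecidableEq ι] [DecidableEq κ]

lemma image_subset_image_iff' {σ : ι → κ} {s : Set ι} (hinj : Set.InjOn σ s)
    {S T : Finset ι} (hS : ↑S ⊆ s) (hT : ↑T ⊆ s) :
    S.image σ ⊆ T.image σ ↔ S ⊆ T := by
  constructor
  · intro hsub x hx
    obtain ⟨y, hy, hxy⟩ := mem_image.mp (hsub (mem_image_of_mem σ hx))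
    rwa [hinj (hT hy) (hS hx) hxy] at hy
  · exact fun h => image_subset_image h

lemma image_inj_of_injOn {σ : ι → κ} {s : Set ι} (hinj : Set.InjOn σ s)
    {S T : Finset ι} (hS : ↑S ⊆ s) (hT : ↑T ⊆ s) (h : S.image σ = T.image σ) : S = T :=
  subset_antisymm
    ((image_subset_image_iff' hinj hS hT).mp h.le)
    ((image_subset_image_iff' hinj hT hS).mp h.ge)

lemma isSperner_image {σ : ι → κ} {s : Set ι} (hinj : Set.InjOn σ s)
    {F : Finset (Finset ι)} (hF : IsSperner F) (hb : ∀ S ∈ F, ↑S ⊆ s) :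
    IsSperner (F.image (fun S => S.image σ)) := by
  intro S' hS' T' hT' hsub
  obtain ⟨S, hS, rfl⟩ := mem_image.mp hS'
  obtain ⟨T, hT, rfl⟩ := mem_image.mp hT'
  rw [image_subset_image_iff' hinj (hb S hS) (hb T hT)] at hsub
  rw [hF S hS T hT hsub]

lemma minimals_image {σ : ι → κ} {s : Set ι} (hinj : Set.InjOn σ s)
    {F : Finset (Finset ι)} (hb : ∀ S ∈ F, ↑S ⊆ s) :
    minimals (F.image (fun S => S.image σ)) = (minimals F).image (fun S => S.image σ) := by
  ext X
  simp only [minimals, mem_filter, mem_image]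
  constructor
  · rintro ⟨⟨S, hS, rfl⟩, hmin⟩
    refine ⟨S, ⟨hS, fun T hT hTS => ?_⟩, rfl⟩
    have h1 : T.image σ ⊆ S.image σ := image_subset_image hTS
    have h2 : T.image σ = S.image σ := hmin _ ⟨T, hT, rfl⟩ h1
    exact image_inj_of_injOn hinj (hb T hT) (hb S hS) h2
  · rintro ⟨S, ⟨hS, hmin⟩, rfl⟩
    refine ⟨⟨S, hS, rfl⟩, ?_⟩
    rintro T' ⟨T, hT, rfl⟩ hsub
    rw [image_subset_image_iff' hinj (hb T hT) (hb S hS)] at hsub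
    rw [hmin T hT hsub]

lemma not_mem_identifyBlock {i j : ι} (hij : i ≠ j) (S : Finset ι) :
    j ∉ identifyBlock i j S := by
  unfold identifyBlock
  split_ifs with h
  · simp [Ne.symm hij]
  · exact h

lemma not_mem_of_mem_identifySystem {i j : ι} (hij : i ≠ j) {F : Finset (Finset ι)}
    {S : Finset ι} (hS : S ∈ identifySystem i j F) : j ∉ S := by
  obtain ⟨T, _, rfl⟩ := mem_image.mp hS
  exact not_mem_identifyBlock hij T

lemma not_mem_of_mem_starMinor {i j : ι} (hij : i ≠ j) {F : Finset (Finset ι)}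
    {S : Finset ι} (hS : S ∈ starMinor i j F) : j ∉ S :=
  not_mem_of_mem_identifySystem hij (minimals_subset _ hS)

end PartC

section PartD
open Finset

variable {n : ℕ}

lemma fin_ne_of_lt {i j : Fin n} (h : (i : ℕ) < (j : ℕ)) : i ≠ j :=
  fun hc => absurd (congrArg Fin.val hc) (by omega)

lemma subset_erase_of_not_mem {j : Fin n} {S : Finset (Fin n)} (h : j ∉ S) :
    ↑S ⊆ (↑((univ : Finset (Fin n)).erase j) : Set (Fin n)) := by
  intro x hx
  simp only [coe_erase, Set.mem_diff, Set.mem_singleton_iff, mem_coe] at *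
  exact ⟨by simp, fun hc => h (hc ▸ hx)⟩

lemma image_deltaMap_identifyBlock {i j : Fin n} (h : (i : ℕ) < (j : ℕ)) (S : Finset (Fin n)) :
    (identifyBlock i j S).image (deltaMap i j h) = S.image (deltaMap i j h) := by
  unfold identifyBlock
  split_ifs with hj
  · conv_rhs => rw [← Finset.insert_erase hj]
    rw [image_insert, image_insert, deltaMap_i_eq_deltaMap_j h]
  · rfl

/-- The minor system: the deck entry `t_I` is the truncated term of this system. -/
def minorSys {n : ℕ} (i j : Fin n) (h : (i : ℕ) < (j : ℕ)) (F : Finset (Finset (Fin n))) :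
    Finset (Finset (Fin (n - 1))) :=
  (starMinor i j F).image (fun S => S.image (deltaMap i j h))

lemma isSperner_minorSys {i j : Fin n} (h : (i : ℕ) < (j : ℕ)) (F : Finset (Finset (Fin n))) :
    IsSperner (minorSys i j h F) :=
  isSperner_image (injOn_deltaMap h) (isSperner_minimals _)
    (fun S hS => subset_erase_of_not_mem (not_mem_of_mem_starMinor (fin_ne_of_lt h) hS))

lemma idMinor_truncTerm {A : Type*} [DistribLattice A] [BoundedOrder A] (a b : A)
    (F : Finset (Finset (Fin n))) (i j : Fin n) (h : (i : ℕ) < (j : ℕ)) (x : Fin (n - 1) → A) :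
    idMinor (truncTerm a b F) i j h x = tt a b (minorSys i j h F) x := by
  have step1 : idMinor (truncTerm a b F) i j h x
      = tt a b (F.image (fun S => S.image (deltaMap i j h))) x := by
    show tt a b F (x ∘ deltaMap i j h) = _
    exact tt_comp a b F (deltaMap i j h) x
  have step2 : F.image (fun S => S.image (deltaMap i j h))
      = (identifySystem i j F).image (fun S => S.image (deltaMap i j h)) := by
    unfold identifySystem
    rw [Finset.image_image]
    apply Finset.image_congr
    intro S _
    exact (image_deltaMap_identifyBlock h S).symm
  have step3 : tt a b ((identifySystem i j F).image (fun S => S.image (deltaMap i j h))) x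
      = tt a b (minorSys i j h F) x := by
    unfold minorSys starMinor
    rw [← minimals_image (injOn_deltaMap h)
      (fun S hS => subset_erase_of_not_mem
        (not_mem_of_mem_identifySystem (fin_ne_of_lt h) hS))]
    rw [tt_minimals]
  rw [step1, step2, step3]

end PartD

section PartE
open Finset

variable {ι κ μ : Type*} [DecidableEq ι] [DecidableEq κ] [DecidableEq μ]

lemma sysImage_comp (F : Finset (Finset ι)) (f : ι → κ) (g : κ → μ) :
    (F.image (fun S => S.image f)).image (fun S => S.image g)
      = F.image (fun S => S.image (g ∘ f)) := by
  rw [Finset.image_image]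
  apply Finset.image_congr
  intro S _
  exact Finset.image_image

lemma sysImage_congr {F : Finset (Finset ι)} {f g : ι → κ}
    (h : ∀ S ∈ F, ∀ t ∈ S, f t = g t) :
    F.image (fun S => S.image f) = F.image (fun S => S.image g) := by
  apply Finset.image_congr
  intro S hS
  exact Finset.image_congr (fun t ht => h S hS t ht)

lemma sysImage_id {F : Finset (Finset ι)} {f : ι → ι} (h : ∀ S ∈ F, ∀ t ∈ S, f t = t) :
    F.image (fun S => S.image f) = F := by
  rw [sysImage_congr (g := id) h]
  simp

variable {n : ℕ}

lemma fnEquiv_of_systemIso {A : Type*} [DistribLattice A] [BoundedOrder A] (a b : A)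
    {F G : Finset (Finset (Fin n))} {i j i' j' : Fin n}
    (h : (i : ℕ) < (j : ℕ)) (h' : (i' : ℕ) < (j' : ℕ))
    (hiso : SystemIso ((univ : Finset (Fin n)).erase j) (starMinor i j F)
      ((univ : Finset (Fin n)).erase j') (starMinor i' j' G)) :
    FnEquiv (idMinor (truncTerm a b F) i j h) (idMinor (truncTerm a b G) i' j' h') := by
  obtain ⟨σ, hbij, himg⟩ := hiso
  set δ := deltaMap i j h with hδ
  set δ' := deltaMap i' j' h' with hδ'
  set τ : Fin (n - 1) → Fin (n - 1) := fun k => δ' (σ (invDelta j k)) with hτ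
  have hmem : ∀ k, invDelta j k ∈ ((univ : Finset (Fin n)).erase j) := by
    intro k; simp [invDelta_ne j k]
  have hmaps : ∀ k, σ (invDelta j k) ∈ ((univ : Finset (Fin n)).erase j') := by
    intro k
    exact hbij.mapsTo (Finset.mem_coe.mpr (hmem k))
  have htinj : Function.Injective τ := by
    intro k1 k2 hk
    have h1 : σ (invDelta j k1) = σ (invDelta j k2) :=
      injOn_deltaMap h' (Finset.mem_coe.mpr (hmaps k1)) (Finset.mem_coe.mpr (hmaps k2)) hk
    have h2 : invDelta j k1 = invDelta j k2 :=
      hbij.injOn (Finset.mem_coe.mpr (hmem k1)) (Finset.mem_coe.mpr (hmem k2)) h1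
    exact injective_invDelta j h h2
  have htbij : Function.Bijective τ := (Finite.injective_iff_bijective).mp htinj
  have key : minorSys i' j' h' G = (minorSys i j h F).image (fun S => S.image τ) := by
    unfold minorSys
    rw [sysImage_comp]
    have e1 : (starMinor i j F).image (fun S => S.image (τ ∘ δ))
        = (starMinor i j F).image (fun S => S.image (δ' ∘ σ)) := by
      apply sysImage_congr
      intro S hS t ht
      have htj : t ≠ j := fun hc => not_mem_of_mem_starMinor (fin_ne_of_lt h) hS (hc ▸ ht)
      show δ' (σ (invDelta j (δ t))) = δ' (σ t)
      rw [hδ, invDelta_deltaMap h htj]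
    rw [e1, ← sysImage_comp, himg]
  set e := Equiv.ofBijective τ htbij with he
  refine ⟨e.symm, fun x => ?_⟩
  rw [idMinor_truncTerm, idMinor_truncTerm, tt_comp, key, sysImage_comp,
    sysImage_id (fun S _ t _ => by
      show e.symm (τ t) = t
      rw [show τ t = e t from rfl, Equiv.symm_apply_apply])]

lemma systemIso_of_fnEquiv {A : Type*} [DistribLattice A] [BoundedOrder A] {a b : A}
    (hab : a < b) {F G : Finset (Finset (Fin n))} {i j i' j' : Fin n}
    (h : (i : ℕ) < (j : ℕ)) (h' : (i' : ℕ) < (j' : ℕ))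
    (heq : FnEquiv (idMinor (truncTerm a b F) i j h) (idMinor (truncTerm a b G) i' j' h')) :
    SystemIso ((univ : Finset (Fin n)).erase j) (starMinor i j F)
      ((univ : Finset (Fin n)).erase j') (starMinor i' j' G) := by
  obtain ⟨ρ, hρ⟩ := heq
  set δ := deltaMap i j h with hδ
  set δ' := deltaMap i' j' h' with hδ'
  have hsys : minorSys i j h F = (minorSys i' j' h' G).image (fun S => S.image ρ) := by
    apply tt_inj hab (isSperner_minorSys h F)
    · apply isSperner_image (s := Set.univ) (fun x _ y _ hxy => ρ.injective hxy)
        (isSperner_minorSys h' G) (fun S _ => Set.subset_univ _)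
    · intro x
      rw [← idMinor_truncTerm, hρ x, idMinor_truncTerm, tt_comp]
  set σ : Fin n → Fin n := fun t => invDelta j' (ρ.symm (δ t)) with hσ
  refine ⟨σ, ?_, ?_⟩
  · have b1 : Set.BijOn δ ↑((univ : Finset (Fin n)).erase j) ↑(univ : Finset (Fin (n - 1))) :=
      bijOn_deltaMap h
    have b2 : Set.BijOn (⇑ρ.symm) ↑(univ : Finset (Fin (n - 1)))
        ↑(univ : Finset (Fin (n - 1))) :=
      ⟨fun y _ => by simp, fun y1 _ y2 _ hy => ρ.symm.injective hy,
        fun y _ => ⟨ρ y, by simp, ρ.symm_apply_apply y⟩⟩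
    have b3 : Set.BijOn (invDelta j') ↑(univ : Finset (Fin (n - 1)))
        ↑((univ : Finset (Fin n)).erase j') := bijOn_invDelta h'
    exact b3.comp (b2.comp b1)
  · have e0 : (starMinor i j F).image (fun S => S.image σ)
        = ((starMinor i j F).image (fun S => S.image δ)).image
            (fun S => S.image (invDelta j' ∘ ⇑ρ.symm)) := by
      rw [sysImage_comp]
      rfl
    rw [e0]
    have e1 : (starMinor i j F).image (fun S => S.image δ) = minorSys i j h F := rfl
    rw [e1, hsys]
    unfold minorSys
    rw [sysImage_comp, sysImage_comp]
    apply sysImage_id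
    intro S hS t ht
    have htj : t ≠ j' := fun hc => not_mem_of_mem_starMinor (fin_ne_of_lt h') hS (hc ▸ ht)
    show invDelta j' (ρ.symm (ρ (δ' t))) = t
    rw [Equiv.symm_apply_apply, hδ', invDelta_deltaMap h' htj]

end PartE

section PartF
open Finset

variable {ι : Type*} [DecidableEq ι]

lemma pair_cases {u v i j : ι} (huv : u ≠ v) (hij : i ≠ j)
    (hp : ({u, v} : Finset ι) = {i, j}) :
    (u = i ∧ v = j) ∨ (u = j ∧ v = i) := by
  have hu : u ∈ ({i, j} : Finset ι) := hp ▸ (by simp)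
  have hv : v ∈ ({i, j} : Finset ι) := hp ▸ (by simp)
  simp only [mem_insert, mem_singleton] at hu hv
  rcases hu with h1 | h1 <;> rcases hv with h2 | h2
  · exact absurd (h1.trans h2.symm) huv
  · exact Or.inl ⟨h1, h2⟩
  · exact Or.inr ⟨h1, h2⟩
  · exact absurd (h1.trans h2.symm) huv

lemma mem_image_swap {u v x : ι} {T : Finset ι} :
    x ∈ T.image (Equiv.swap u v) ↔ Equiv.swap u v x ∈ T := by
  rw [mem_image]
  constructor
  · rintro ⟨y, hy, rfl⟩
    rwa [Equiv.swap_apply_self]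
  · intro hx
    exact ⟨Equiv.swap u v x, hx, Equiv.swap_apply_self u v x⟩

lemma image_swap_identifyBlock {u v : ι} (huv : u ≠ v) (S : Finset ι) :
    (identifyBlock u v S).image (Equiv.swap u v) = identifyBlock v u S := by
  ext x
  rw [mem_image_swap]
  by_cases hv : v ∈ S <;> by_cases hu : u ∈ S <;> by_cases hx1 : x = u <;>
    by_cases hx2 : x = v <;>
    simp_all [identifyBlock, Equiv.swap_apply_def, mem_insert, mem_erase, huv, Ne.symm huv]

lemma systemIso_starMinor_swap {ι : Type*} [DecidableEq ι] [Fintype ι] {u v : ι}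
    (huv : u ≠ v) (F : Finset (Finset ι)) :
    SystemIso ((univ : Finset ι).erase v) (starMinor u v F)
      ((univ : Finset ι).erase u) (starMinor v u F) := by
  refine ⟨Equiv.swap u v, ?_, ?_⟩
  · refine ⟨fun x hx => ?_, fun x _ y _ hxy => (Equiv.swap u v).injective hxy, fun y hy => ?_⟩
    · simp only [coe_erase, Set.mem_diff, Set.mem_singleton_iff, coe_univ, Set.mem_univ,
        true_and] at hx ⊢
      intro hc
      rw [Equiv.swap_apply_eq_iff, Equiv.swap_apply_left] at hc
      exact hx hc
    · simp only [coe_erase, Set.mem_diff, Set.mem_singleton_iff, coe_univ, Set.mem_univ,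
        true_and] at hy ⊢
      refine ⟨Equiv.swap u v y, ?_, Equiv.swap_apply_self u v y⟩
      exact ⟨trivial, fun hc => hy (by
        rw [← Equiv.swap_apply_self u v y, Set.mem_singleton_iff.mp hc,
          Equiv.swap_apply_right])⟩
  · unfold starMinor
    rw [minimals_image (s := Set.univ) (fun x _ y _ hxy => (Equiv.swap u v).injective hxy)
      (fun S _ => Set.subset_univ _) |>.symm]
    congr 1
    unfold identifySystem
    rw [Finset.image_image]
    apply Finset.image_congr
    intro S _
    exact image_swap_identifyBlock huv S

lemma systemIso_trans {α β γ : Type*} [DecidableEq α] [DecidableEq β] [DecidableEq γ]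
    {A : Finset α} {B : Finset β} {C : Finset γ} {F : Finset (Finset α)}
    {G : Finset (Finset β)} {H : Finset (Finset γ)}
    (h1 : SystemIso A F B G) (h2 : SystemIso B G C H) : SystemIso A F C H := by
  obtain ⟨σ, hb, hi⟩ := h1
  obtain ⟨σ', hb', hi'⟩ := h2
  exact ⟨σ' ∘ σ, hb'.comp hb, by rw [← sysImage_comp, hi, hi']⟩

end PartF

section PairEquiv
open Finset

variable {n : ℕ}

lemma card_two_of_mem_powersetCard {P : Finset (Fin n)}
    (hP : P ∈ (univ : Finset (Fin n)).powersetCard 2) : P.card = 2 :=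
  (Finset.mem_powersetCard.mp hP).2

def pairEquiv (n : ℕ) : {p : Fin n × Fin n // (p.1 : ℕ) < (p.2 : ℕ)} ≃
    {P : Finset (Fin n) // P ∈ (univ : Finset (Fin n)).powersetCard 2} where
  toFun p := ⟨{p.1.1, p.1.2}, by
    rw [Finset.mem_powersetCard]
    exact ⟨subset_univ _, Finset.card_pair (fin_ne_of_lt p.2)⟩⟩
  invFun P :=
    have hne : P.1.Nonempty := Finset.card_pos.mp (by rw [card_two_of_mem_powersetCard P.2]; norm_num)
    have hlt : P.1.min' hne < P.1.max' hne :=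
      Finset.min'_lt_max'_of_card _ (by rw [card_two_of_mem_powersetCard P.2]; norm_num)
    ⟨(P.1.min' hne, P.1.max' hne), hlt⟩
  left_inv p := by
    obtain ⟨⟨i, j⟩, hij⟩ := p
    have hne : i ≠ j := fin_ne_of_lt hij
    apply Subtype.ext
    have hmin : ({i, j} : Finset (Fin n)).min' ⟨i, by simp⟩ = i := by
      apply le_antisymm (Finset.min'_le _ _ (by simp))
      apply Finset.le_min'
      intro y hy
      simp only [mem_insert, mem_singleton] at hy
      rcases hy with rfl | rfl
      · exact le_rfl
      · exact le_of_lt hij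
    have hmax : ({i, j} : Finset (Fin n)).max' ⟨i, by simp⟩ = j := by
      apply le_antisymm
      · apply Finset.max'_le
        intro y hy
        simp only [mem_insert, mem_singleton] at hy
        rcases hy with rfl | rfl
        · exact le_of_lt hij
        · exact le_rfl
      · exact Finset.le_max' _ _ (by simp)
    simp only
    rw [show ∀ (h1 : ({i,j} : Finset (Fin n)).Nonempty), ({i,j} : Finset (Fin n)).min' h1 = i
      from fun _ => hmin, show ∀ (h1 : ({i,j} : Finset (Fin n)).Nonempty),
      ({i,j} : Finset (Fin n)).max' h1 = j from fun _ => hmax]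
  right_inv P := by
    obtain ⟨P, hP⟩ := P
    apply Subtype.ext
    simp only
    have hne : P.Nonempty :=
      Finset.card_pos.mp (by rw [card_two_of_mem_powersetCard hP]; norm_num)
    have hlt : P.min' hne < P.max' hne :=
      Finset.min'_lt_max'_of_card _ (by rw [card_two_of_mem_powersetCard hP]; norm_num)
    apply Finset.eq_of_subset_of_card_le
    · apply Finset.insert_subset (Finset.min'_mem _ _)
      simpa using Finset.max'_mem P _
    · have h2 : ({P.min' hne, P.max' hne} : Finset (Fin n)).card = 2 :=
        Finset.card_pair (ne_of_lt hlt)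
      exact le_of_eq ((card_two_of_mem_powersetCard hP).trans h2.symm)

lemma pairEquiv_coe (p : {p : Fin n × Fin n // (p.1 : ℕ) < (p.2 : ℕ)}) :
    ((pairEquiv n p : Finset (Fin n))) = {p.1.1, p.1.2} := rfl

end PairEquiv

section PartG
open Finset

variable {n : ℕ} {A : Type*} [Fintype A] [DistribLattice A] [BoundedOrder A]

/-- Each identification minor of a function with the same deck as a truncated term
is itself (exactly) a truncated term of some system over `Fin (n-1)`. -/
lemma minor_rep_aux {a b : A} {F : Finset (Finset (Fin n))} {g : (Fin n → A) → A}
    {i0 j0 i j : Fin n} (h0 : (i0 : ℕ) < (j0 : ℕ)) (h : (i : ℕ) < (j : ℕ))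
    (hfe : FnEquiv (idMinor (truncTerm a b F) i0 j0 h0) (idMinor g i j h)) :
    ∃ D : Finset (Finset (Fin (n - 1))), ∀ y, idMinor g i j h y = tt a b D y := by
  obtain ⟨σ, hσ⟩ := hfe
  refine ⟨(minorSys i0 j0 h0 F).image (fun S => S.image ⇑σ.symm), fun y => ?_⟩
  have h2 : idMinor g i j h y = idMinor (truncTerm a b F) i0 j0 h0 (y ∘ ⇑σ.symm) := by
    have h3 := hσ (y ∘ ⇑σ.symm)
    have h4 : (y ∘ ⇑σ.symm) ∘ ⇑σ = y := by
      funext t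
      simp [Function.comp]
    rw [h4] at h3
    exact h3.symm
  rw [h2, idMinor_truncTerm, tt_comp]

lemma idMinor_congr {B : Type*} (f : (Fin n → B) → B) {i j i' j' : Fin n}
    (h : (i : ℕ) < (j : ℕ)) (e1 : i = i') (e2 : j = j')
    (h' : (i' : ℕ) < (j' : ℕ)) : idMinor f i j h = idMinor f i' j' h' := by
  subst e1; subst e2; rfl

lemma minor_rep {a b : A} {F : Finset (Finset (Fin n))} {g : (Fin n → A) → A}
    (hdeck : SameDeck (truncTerm a b F) g) (i j : Fin n) (h : (i : ℕ) < (j : ℕ)) :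
    ∃ D : Finset (Finset (Fin (n - 1))), ∀ y, idMinor g i j h y = tt a b D y := by
  obtain ⟨φ, hφ⟩ := hdeck
  set p' : {p : Fin n × Fin n // (p.1 : ℕ) < (p.2 : ℕ)} := ⟨(i, j), h⟩ with hp'
  set q := φ.symm p' with hq
  have h1 := hφ q
  have hqq : φ q = p' := φ.apply_symm_apply p'
  have e1 : (φ q).1.1 = i := by rw [hqq]
  have e2 : (φ q).1.2 = j := by rw [hqq]
  rw [idMinor_congr g (φ q).2 e1 e2 h] at h1
  exact minor_rep_aux q.2 h h1

/-- For a tuple with a repetition at `(i,j)`, the value of `g` is a value of its minor. -/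
lemma g_eq_minor {g : (Fin n → A) → A} {i j : Fin n} (h : (i : ℕ) < (j : ℕ))
    {x : Fin n → A} (hx : x i = x j) :
    g x = idMinor g i j h (x ∘ invDelta j) := by
  have heq : (x ∘ invDelta j) ∘ deltaMap i j h = x := by
    funext t
    by_cases ht : t = j
    · subst ht
      show x (invDelta t (deltaMap i t h t)) = x t
      rw [← deltaMap_i_eq_deltaMap_j h, invDelta_deltaMap h (fin_ne_of_lt h)]
      exact hx
    · show x (invDelta j (deltaMap i j h t)) = x t
      rw [invDelta_deltaMap h ht]
  show g x = g ((x ∘ invDelta j) ∘ deltaMap i j h)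
  rw [heq]

/-- Pointwise representation by a system avoiding `j`, valid on tuples repeating at `(i,j)`. -/
lemma rep_at {a b : A} {F : Finset (Finset (Fin n))} {g : (Fin n → A) → A}
    (hdeck : SameDeck (truncTerm a b F) g) (i j : Fin n) (h : (i : ℕ) < (j : ℕ)) :
    ∃ E : Finset (Finset (Fin n)), (∀ S ∈ E, j ∉ S) ∧
      ∀ x : Fin n → A, x i = x j → g x = tt a b E x := by
  obtain ⟨D, hD⟩ := minor_rep hdeck i j h
  refine ⟨D.image (fun S => S.image (invDelta j)), ?_, ?_⟩
  · intro S hS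
    obtain ⟨S', _, rfl⟩ := mem_image.mp hS
    intro hc
    obtain ⟨k, _, hk⟩ := mem_image.mp hc
    exact invDelta_ne j k hk
  · intro x hx
    rw [g_eq_minor (g := g) h hx, hD, tt_comp]

lemma exists_repeat (hcard : Fintype.card A < n) (x : Fin n → A) :
    ∃ i j : Fin n, (i : ℕ) < (j : ℕ) ∧ x i = x j := by
  have hlt : Fintype.card A < Fintype.card (Fin n) := by simpa using hcard
  obtain ⟨i, j, hne, hx⟩ := Fintype.exists_ne_map_eq_of_card_lt x hlt
  rcases Nat.lt_or_ge (i : ℕ) (j : ℕ) with hlt' | hge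
  · exact ⟨i, j, hlt', hx⟩
  · have : (j : ℕ) < (i : ℕ) := by
      rcases Nat.lt_or_ge (j : ℕ) (i : ℕ) with h' | h'
      · exact h'
      · exact absurd (Fin.ext (le_antisymm h' hge)) hne
    exact ⟨j, i, this, hx.symm⟩

lemma common_pair (hn4 : 4 ≤ n) {T T' : Finset (Fin n)} (hsub : T ⊆ T') :
    ∃ i j : Fin n, (i : ℕ) < (j : ℕ) ∧ (i ∈ T ↔ j ∈ T) ∧ (i ∈ T' ↔ j ∈ T') := by
  classical
  set ψ : Fin n → Fin 3 := fun t => if t ∈ T then 0 else if t ∈ T' then 1 else 2 with hψ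
  have hcard : Fintype.card (Fin 3) < Fintype.card (Fin n) := by
    simp only [Fintype.card_fin]; omega
  obtain ⟨i, j, hne, heq⟩ := Fintype.exists_ne_map_eq_of_card_lt ψ hcard
  have key : ∀ s t : Fin n, ψ s = ψ t → ((s ∈ T ↔ t ∈ T) ∧ (s ∈ T' ↔ t ∈ T')) := by
    intro s t hst
    by_cases h1 : s ∈ T <;> by_cases h2 : t ∈ T <;>
      by_cases h3 : s ∈ T' <;> by_cases h4 : t ∈ T' <;>
      simp only [hψ, h1, h2, h3, h4, if_true, if_false] at hst ⊢ <;>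
      first
        | exact ⟨by tauto, by tauto⟩
        | exact absurd hst (by decide)
        | exact absurd (hsub h1) h3
        | exact absurd (hsub h2) h4
  have hkey := key i j heq
  rcases Nat.lt_or_ge (i : ℕ) (j : ℕ) with hlt' | hge
  · exact ⟨i, j, hlt', hkey.1, hkey.2⟩
  · have hji : (j : ℕ) < (i : ℕ) := by
      rcases Nat.lt_or_ge (j : ℕ) (i : ℕ) with h' | h'
      · exact h'
      · exact absurd (Fin.ext (le_antisymm h' hge)) hne
    exact ⟨j, i, hji, hkey.1.symm, hkey.2.symm⟩

lemma chi_eq_of_iff {T : Finset (Fin n)} {i j : Fin n} (h : i ∈ T ↔ j ∈ T) :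
    (chi T i : A) = chi T j := by
  unfold chi
  by_cases hi : i ∈ T
  · rw [if_pos hi, if_pos (h.mp hi)]
  · rw [if_neg hi, if_neg (fun hc => hi (h.mpr hc))]

/-- THE key structural lemma: a function with the same deck as a truncated term is a
truncated term (of the Sperner system of minimal "true points"). -/
lemma deck_implies_truncTerm {a b : A} (hab : a < b) (hn : Fintype.card A + 2 ≤ n)
    {F : Finset (Finset (Fin n))} {g : (Fin n → A) → A}
    (hdeck : SameDeck (truncTerm a b F) g) :
    ∃ G : Finset (Finset (Fin n)), IsSperner G ∧ ∀ x, g x = truncTerm a b G x := by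
  classical
  have hcardA : 2 ≤ Fintype.card A := Fintype.one_lt_card_iff_nontrivial.mpr ⟨⟨a, b, hab.ne⟩⟩
  have hn4 : 4 ≤ n := by omega
  have hrepeat : ∀ x : Fin n → A, ∃ i j : Fin n, (i : ℕ) < (j : ℕ) ∧ x i = x j :=
    exists_repeat (by omega)
  set U : Finset (Finset (Fin n)) := Finset.univ.filter (fun T => g (chi T) = b) with hU
  have hmemU : ∀ T : Finset (Fin n), T ∈ U ↔ g (chi T) = b := by
    intro T; simp [hU]
  -- U is up-closed
  have hup : ∀ T T' : Finset (Fin n), T ⊆ T' → T ∈ U → T' ∈ U := by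
    intro T T' hsub hT
    obtain ⟨i, j, hij, hiff, hiff'⟩ := common_pair hn4 hsub
    obtain ⟨E, _, hE⟩ := rep_at hdeck i j hij
    rw [hmemU, hE _ (chi_eq_of_iff hiff), tt_chi_eq_b_iff hab] at hT
    obtain ⟨S, hS, hST⟩ := hT
    rw [hmemU, hE _ (chi_eq_of_iff hiff'), tt_chi_eq_b_iff hab]
    exact ⟨S, hS, hST.trans hsub⟩
  -- main pointwise identity
  have hmain : ∀ x, g x = tt a b U x := by
    intro x
    obtain ⟨i, j, hij, hx⟩ := hrepeat x
    obtain ⟨E, hEj, hE⟩ := rep_at hdeck i j hij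
    rw [hE x hx]
    have hsup : E.sup (fun S => S.inf x) = U.sup (fun S => S.inf x) := by
      apply le_antisymm
      · apply Finset.sup_le
        intro S hS
        set T : Finset (Fin n) := if i ∈ S then insert j S else S with hT
        have hTiff : i ∈ T ↔ j ∈ T := by
          rw [hT]
          split_ifs with hi
          · simp [hi]
          · simp [hi, hEj S hS]
        have hTU : T ∈ U := by
          rw [hmemU, hE _ (chi_eq_of_iff hTiff), tt_chi_eq_b_iff hab]
          refine ⟨S, hS, ?_⟩
          rw [hT]
          split_ifs
          · exact subset_insert _ _
          · exact subset_rfl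
        have hinf : T.inf x = S.inf x := by
          rw [hT]
          split_ifs with hi
          · rw [Finset.inf_insert]
            have : S.inf x ≤ x j := le_trans (Finset.inf_le hi) (le_of_eq hx)
            exact inf_eq_right.mpr this
          · rfl
        calc S.inf x = T.inf x := hinf.symm
        _ ≤ _ := Finset.le_sup (f := fun S => S.inf x) hTU
      · apply Finset.sup_le
        intro T hT
        set T' : Finset (Fin n) := if i ∈ T then insert j T else if j ∈ T then insert i T else T
          with hT'
        have hsub : T ⊆ T' := by
          rw [hT']; split_ifs
          · exact subset_insert _ _
          · exact subset_insert _ _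
          · exact subset_rfl
        have hT'U : T' ∈ U := hup T T' hsub hT
        have hT'iff : i ∈ T' ↔ j ∈ T' := by
          rw [hT']
          split_ifs with h1 h2
          · simp [h1]
          · simp [h2]
          · simp [h1, h2]
        have hinf : T'.inf x = T.inf x := by
          rw [hT']
          split_ifs with h1 h2
          · rw [Finset.inf_insert]
            exact inf_eq_right.mpr (le_trans (Finset.inf_le h1) (le_of_eq hx))
          · rw [Finset.inf_insert]
            exact inf_eq_right.mpr (le_trans (Finset.inf_le h2) (le_of_eq hx.symm))
          · rfl
        rw [hmemU, hE _ (chi_eq_of_iff hT'iff), tt_chi_eq_b_iff hab] at hT'U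
        obtain ⟨S, hS, hST'⟩ := hT'U
        calc T.inf x = T'.inf x := hinf.symm
        _ ≤ S.inf x := Finset.inf_mono hST'
        _ ≤ _ := Finset.le_sup (f := fun S => S.inf x) hS
    unfold tt
    rw [hsup]
  refine ⟨minimals U, isSperner_minimals U, fun x => ?_⟩
  have : truncTerm a b (minimals U) x = tt a b (minimals U) x := rfl
  rw [this, tt_minimals, hmain]

end PartG

section PartH
open Finset

variable {n : ℕ}

lemma systemIso_refl {ι : Type*} [DecidableEq ι] (B : Finset ι) (F : Finset (Finset ι)) :
    SystemIso B F B F := by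
  refine ⟨id, Set.bijOn_id _, ?_⟩
  simp

lemma bijOn_equiv_univ {ι : Type*} [Fintype ι] [DecidableEq ι] (e : ι ≃ ι) :
    Set.BijOn ⇑e ↑(univ : Finset ι) ↑(univ : Finset ι) :=
  ⟨fun y _ => by simp, fun y1 _ y2 _ hy => e.injective hy,
    fun y _ => ⟨e.symm y, by simp, e.apply_symm_apply y⟩⟩

/-- From a deck bijection between truncated terms, construct a hypomorphism. -/
lemma hypomorphic_of_sameDeck {A : Type*} [DistribLattice A] [BoundedOrder A] {a b : A}
    (hab : a < b) {F G : Finset (Finset (Fin n))}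
    (hdeck : SameDeck (truncTerm a b F) (truncTerm a b G)) :
    Hypomorphic (Finset.univ : Finset (Fin n)) F G := by
  obtain ⟨φ, hφ⟩ := hdeck
  refine ⟨((pairEquiv n).symm.trans φ).trans (pairEquiv n), ?_⟩
  intro P u v u' v' huv hPuv hu'v' hQuv
  set p := (pairEquiv n).symm P with hp
  set q := φ p with hq
  have hfe : FnEquiv (idMinor (truncTerm a b F) p.1.1 p.1.2 p.2)
      (idMinor (truncTerm a b G) q.1.1 q.1.2 q.2) := hφ p
  have iso0 : SystemIso ((univ : Finset (Fin n)).erase p.1.2) (starMinor p.1.1 p.1.2 F)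
      ((univ : Finset (Fin n)).erase q.1.2) (starMinor q.1.1 q.1.2 G) :=
    systemIso_of_fnEquiv hab p.2 q.2 hfe
  -- identify the unordered pairs
  have hPcoe : (P : Finset (Fin n)) = {p.1.1, p.1.2} := by
    conv_lhs => rw [show P = pairEquiv n p from ((pairEquiv n).apply_symm_apply P).symm]
    exact pairEquiv_coe p
  have hQcoe : ((((pairEquiv n).symm.trans φ).trans (pairEquiv n)) P : Finset (Fin n))
      = {q.1.1, q.1.2} := rfl
  have hFpair := pair_cases huv (fin_ne_of_lt p.2) (hPuv ▸ hPcoe)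
  have hGpair := pair_cases hu'v' (fin_ne_of_lt q.2) (hQuv ▸ hQcoe)
  have isoF : SystemIso ((univ : Finset (Fin n)).erase v) (starMinor u v F)
      ((univ : Finset (Fin n)).erase p.1.2) (starMinor p.1.1 p.1.2 F) := by
    rcases hFpair with ⟨rfl, rfl⟩ | ⟨hu, hv⟩
    · exact systemIso_refl _ _
    · subst hu; subst hv
      exact systemIso_starMinor_swap huv F
  have isoG : SystemIso ((univ : Finset (Fin n)).erase q.1.2) (starMinor q.1.1 q.1.2 G)
      ((univ : Finset (Fin n)).erase v') (starMinor u' v' G) := by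
    rcases hGpair with ⟨rfl, rfl⟩ | ⟨hu, hv⟩
    · exact systemIso_refl _ _
    · subst hu; subst hv
      exact systemIso_starMinor_swap (fin_ne_of_lt q.2) G
  exact systemIso_trans (systemIso_trans isoF iso0) isoG

/-- From a hypomorphism, construct a deck bijection between the truncated terms. -/
lemma sameDeck_of_hypomorphic {A : Type*} [DistribLattice A] [BoundedOrder A] (a b : A)
    {F G : Finset (Finset (Fin n))}
    (hhyp : Hypomorphic (Finset.univ : Finset (Fin n)) F G) :
    SameDeck (truncTerm a b F) (truncTerm a b G) := by
  obtain ⟨ψ, hψ⟩ := hhyp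
  refine ⟨((pairEquiv n).trans ψ).trans (pairEquiv n).symm, ?_⟩
  intro p
  set q := (pairEquiv n).symm (ψ (pairEquiv n p)) with hqdef
  have hQcoe : ((ψ (pairEquiv n p) : Finset (Fin n))) = {q.1.1, q.1.2} := by
    conv_lhs => rw [show ψ (pairEquiv n p) = pairEquiv n q from
      ((pairEquiv n).apply_symm_apply (ψ (pairEquiv n p))).symm]
    exact pairEquiv_coe q
  have iso := hψ (pairEquiv n p) p.1.1 p.1.2 q.1.1 q.1.2 (fin_ne_of_lt p.2)
    (pairEquiv_coe p) (fin_ne_of_lt q.2) hQcoe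
  exact fnEquiv_of_systemIso a b p.2 q.2 iso

end PartH

/-- Let `A` be a finite bounded distributive lattice, `a < b` in `A`, `n ≥ |A| + 2`,
and `𝒜` a Sperner system over `{1,…,n}`.  Then `𝒜` is reconstructible (every Sperner
system over `{1,…,n}` hypomorphic to `𝒜` is isomorphic to `𝒜`) if and only if the
`(a,b)`-truncated term operation `t = t^{ab}_𝒜` is reconstructible (every function
with the same deck as `t` is equivalent to `t`). -/
theorem statement19 {A : Type*} [Fintype A] [DistribLattice A] [BoundedOrder A]
    (a b : A) (hab : a < b) (n : ℕ) (hn : Fintype.card A + 2 ≤ n)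
    (F : Finset (Finset (Fin n))) (hsp : IsSperner F) :
    (∀ G : Finset (Finset (Fin n)), IsSperner G →
        Hypomorphic (Finset.univ : Finset (Fin n)) F G →
        SystemIso (Finset.univ : Finset (Fin n)) F (Finset.univ : Finset (Fin n)) G) ↔
    (∀ g : (Fin n → A) → A, SameDeck (truncTerm a b F) g →
        FnEquiv (truncTerm a b F) g) := by
  constructor
  · -- system reconstructibility implies function reconstructibility
    intro hrec g hdeck
    obtain ⟨G, hGsp, hGrep⟩ := deck_implies_truncTerm hab hn hdeck
    have hg : g = truncTerm a b G := funext hGrep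
    subst hg
    have hhyp : Hypomorphic (Finset.univ : Finset (Fin n)) F G :=
      hypomorphic_of_sameDeck hab hdeck
    obtain ⟨σ, hbij, himg⟩ := hrec G hGsp hhyp
    have hb : Function.Bijective σ := by
      rw [← Set.bijOn_univ]
      simpa using hbij
    set e := Equiv.ofBijective σ hb with he
    refine ⟨e.symm, fun x => ?_⟩
    have h1 : truncTerm a b G (x ∘ ⇑e.symm) = tt a b (G.image (fun S => S.image ⇑e.symm)) x :=
      tt_comp a b G (⇑e.symm) x
    have h2 : (G.image (fun S => S.image ⇑e.symm))
        = (F.image (fun S => S.image σ)).image (fun S => S.image ⇑e.symm) := by rw [himg]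
    have h3 : (F.image (fun S => S.image σ)).image (fun S => S.image ⇑e.symm)
        = F.image (fun S => S.image (⇑e.symm ∘ σ)) := sysImage_comp _ _ _
    have h4 : F.image (fun S => S.image (⇑e.symm ∘ σ)) = F :=
      sysImage_id (fun S _ t _ => by
        show e.symm (σ t) = t
        exact e.symm_apply_apply t)
    show truncTerm a b F x = truncTerm a b G (x ∘ ⇑e.symm)
    rw [h1, h2, h3, h4]
    rfl
  · -- function reconstructibility implies system reconstructibility
    intro hrec G hGsp hhyp
    have hdeck : SameDeck (truncTerm a b F) (truncTerm a b G) :=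
      sameDeck_of_hypomorphic a b hhyp
    obtain ⟨σ, hσ⟩ := hrec (truncTerm a b G) hdeck
    have hFG : F = G.image (fun S => S.image ⇑σ) := by
      apply tt_inj hab hsp
      · exact isSperner_image (s := Set.univ) (fun x _ y _ h => σ.injective h) hGsp
          (fun S _ => Set.subset_univ _)
      · intro x
        calc tt a b F x = truncTerm a b G (x ∘ ⇑σ) := hσ x
        _ = tt a b (G.image (fun S => S.image ⇑σ)) x := tt_comp a b G ⇑σ x
    refine ⟨⇑σ.symm, bijOn_equiv_univ σ.symm, ?_⟩
    rw [hFG, sysImage_comp]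
    exact sysImage_id (fun S _ t _ => σ.symm_apply_apply t)
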